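/- Let N ≥ 1 and 0 ≤ n ≤ N−1 be integers and ρ a real number with ρ ≠ 1 and 1+(N−n−1)ρ ≠ 0. Partition the matrix ρ·J_N + (1−ρ)·I_N into a leading (N−n)×(N−n) block A := ρ·J_{N−n} + (1−ρ)·I_{N−n} and a trailing n×n block. Then A is invertible and 𝟙ᵀ · ((ρ·J_n + (1−ρ)·I_n) − (ρ·J_{n,N−n})·A⁻¹·(ρ·J_{N−n,n})) · 𝟙 = ψ(N,n,ρ), i.e., the sum of all entries of the Schur complement of A equals ψ(N,n,ρ). -/

import Mathlib

open Matrix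

noncomputable section

/-- The all-ones matrix. -/
def J (a b : ℕ) : Matrix (Fin a) (Fin b) ℝ := Matrix.of fun _ _ => 1

/-- The cut-set quantity ψ(N,n,ρ) of Niesen–Diggavi. -/
def psi (N n : ℕ) (ρ : ℝ) : ℝ :=
  (n : ℝ) * (1 + ((n : ℝ) - 1) * ρ
    - (n : ℝ) * ((N : ℝ) - (n : ℝ)) * ρ ^ 2 / (1 + ((N : ℝ) - (n : ℝ) - 1) * ρ))

/-! The rows of `J n m` are left eigenvectors of `A = a • J m m + b • 1` with eigenvalue
`a * m + b`, so `J n m * A⁻¹ = (a * m + b)⁻¹ • J n m`. Hence the Schur complement is again of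
the form `α • J n n + β • 1`, and the sum of its entries is `α * n ^ 2 + β * n`. -/

lemma J_apply {a b : ℕ} (i : Fin a) (j : Fin b) : J a b i j = 1 := rfl

lemma J_mul_J (a b k : ℕ) : J a b * J b k = (b : ℝ) • J a k := by
  ext i j
  simp [J_apply, Matrix.mul_apply]

lemma smul_J_add_smul_one_mul (m : ℕ) (a b a' b' : ℝ) :
    (a • J m m + b • (1 : Matrix (Fin m) (Fin m) ℝ)) * (a' • J m m + b' • 1)
      = (a * a' * m + a * b' + b * a') • J m m + (b * b') • 1 := by
  simp only [Matrix.add_mul, Matrix.mul_add, Matrix.smul_mul, Matrix.mul_smul, J_mul_J,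
    Matrix.mul_one, Matrix.one_mul]
  module

lemma J_mul_smul_J_add_smul_one (n m : ℕ) (a b : ℝ) :
    J n m * (a • J m m + b • (1 : Matrix (Fin m) (Fin m) ℝ)) = (a * m + b) • J n m := by
  rw [Matrix.mul_add, Matrix.mul_smul, Matrix.mul_smul, J_mul_J, Matrix.mul_one, smul_smul,
    add_smul]

lemma smul_J_add_smul_one_mul_eq_one {m : ℕ} {a b : ℝ} (hb : b ≠ 0)
    (hc : a * m + b ≠ 0) :
    (a • J m m + b • (1 : Matrix (Fin m) (Fin m) ℝ)) *
        ((-(a / (b * (a * m + b)))) • J m m + b⁻¹ • 1) = 1 := by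
  rw [smul_J_add_smul_one_mul]
  have hJ : a * -(a / (b * (a * m + b))) * m + a * b⁻¹ + b * -(a / (b * (a * m + b))) = 0 := by
    field_simp
    ring
  rw [hJ, mul_inv_cancel₀ hb, zero_smul, zero_add, one_smul]

lemma isUnit_smul_J_add_smul_one {m : ℕ} {a b : ℝ} (hb : b ≠ 0) (hc : a * m + b ≠ 0) :
    IsUnit (a • J m m + b • (1 : Matrix (Fin m) (Fin m) ℝ)) :=
  (isUnit_iff_isUnit_det _).mpr
    (isUnit_det_of_right_inverse (smul_J_add_smul_one_mul_eq_one hb hc))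

lemma J_mul_inv_smul_J_add_smul_one (n : ℕ) {m : ℕ} {a b : ℝ} (hb : b ≠ 0)
    (hc : a * m + b ≠ 0) :
    J n m * (a • J m m + b • (1 : Matrix (Fin m) (Fin m) ℝ))⁻¹ = (a * m + b)⁻¹ • J n m := by
  have hdet := (isUnit_iff_isUnit_det _).mp (isUnit_smul_J_add_smul_one hb hc)
  calc J n m * (a • J m m + b • 1)⁻¹
      = (a * m + b)⁻¹ • ((a * m + b) • J n m) * (a • J m m + b • 1)⁻¹ := by
        rw [smul_smul, inv_mul_cancel₀ hc, one_smul]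
    _ = (a * m + b)⁻¹ • J n m := by
        rw [← J_mul_smul_J_add_smul_one, Matrix.smul_mul, mul_nonsing_inv_cancel_right _ _ hdet]

lemma sum_smul_J_add_smul_one (n : ℕ) (a b : ℝ) :
    ∑ i : Fin n, ∑ j : Fin n, (a • J n n + b • (1 : Matrix (Fin n) (Fin n) ℝ)) i j
      = a * n ^ 2 + b * n := by
  simp only [Matrix.add_apply, Matrix.smul_apply, J_apply, smul_eq_mul, mul_one,
    Matrix.one_apply, mul_ite, mul_zero, Finset.sum_add_distrib, Finset.sum_const,
    Finset.card_univ, Fintype.card_fin, nsmul_eq_mul, Finset.sum_ite_eq, Finset.mem_univ,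
    if_true]
  ring

theorem stmt_8_general (N n : ℕ) (hn : n ≤ N - 1) (ρ : ℝ)
    (h1 : ρ ≠ 1) (h2 : 1 + ((N : ℝ) - (n : ℝ) - 1) * ρ ≠ 0) :
    IsUnit (ρ • J (N - n) (N - n) +
        (1 - ρ) • (1 : Matrix (Fin (N - n)) (Fin (N - n)) ℝ)) ∧
    ∑ i : Fin n, ∑ j : Fin n,
        ((ρ • J n n + (1 - ρ) • (1 : Matrix (Fin n) (Fin n) ℝ))
          - (ρ • J n (N - n)) *
            (ρ • J (N - n) (N - n) +
              (1 - ρ) • (1 : Matrix (Fin (N - n)) (Fin (N - n)) ℝ))⁻¹ *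
            (ρ • J (N - n) n)) i j
      = psi N n ρ := by
  have hm : ((N - n : ℕ) : ℝ) = N - n := Nat.cast_sub (hn.trans (Nat.sub_le N 1))
  set m := N - n
  set c := ρ * m + (1 - ρ)
  have hb : 1 - ρ ≠ 0 := sub_ne_zero.mpr h1.symm
  have hc : c ≠ 0 := by
    convert h2 using 1
    simp only [c, hm]
    ring
  have hschur : (ρ • J n n + (1 - ρ) • (1 : Matrix (Fin n) (Fin n) ℝ))
        - (ρ • J n m) * (ρ • J m m + (1 - ρ) • 1)⁻¹ * (ρ • J m n)
      = (ρ - ρ ^ 2 * m / c) • J n n + (1 - ρ) • 1 := by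
    rw [Matrix.smul_mul, J_mul_inv_smul_J_add_smul_one n hb hc, Matrix.smul_mul,
      Matrix.smul_mul, Matrix.mul_smul, J_mul_J]
    module
  refine ⟨isUnit_smul_J_add_smul_one hb hc, ?_⟩
  rw [hschur, sum_smul_J_add_smul_one, psi, ← hm, show 1 + ((m : ℝ) - 1) * ρ = c by ring]
  ring

theorem stmt_8 (N n : ℕ) (hN : 1 ≤ N) (hn : n ≤ N - 1) (ρ : ℝ)
    (h1 : ρ ≠ 1) (h2 : 1 + ((N : ℝ) - (n : ℝ) - 1) * ρ ≠ 0) :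
    IsUnit (ρ • J (N - n) (N - n) +
        (1 - ρ) • (1 : Matrix (Fin (N - n)) (Fin (N - n)) ℝ)) ∧
    ∑ i : Fin n, ∑ j : Fin n,
        ((ρ • J n n + (1 - ρ) • (1 : Matrix (Fin n) (Fin n) ℝ))
          - (ρ • J n (N - n)) *
            (ρ • J (N - n) (N - n) +
              (1 - ρ) • (1 : Matrix (Fin (N - n)) (Fin (N - n)) ℝ))⁻¹ *
            (ρ • J (N - n) n)) i j
      = psi N n ρ :=
  stmt_8_general N n hn ρ h1 h2
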